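/- arXiv:2511.00188 — 8 statements merged into one kernel-verified Lean document; each statement's English description precedes it below -/
import Mathlib

section
/- Let X be a presheaf on Set_s^f satisfying Conditions (2) and (3). Then for every surjection f : Fin m → Fin n, the map X f : X n → X m is injective. -/
/-- A presheaf on `Set_s^f`: a family of sets `obj n` together with, for every surjection
`f : Fin m → Fin n`, a map `map f : obj n → obj m`, functorially. -/
structure SurjPresheaf where
  obj : ℕ → Type
  map : ∀ {m n : ℕ} (f : Fin m → Fin n), Function.Surjective f → obj n → obj m
  map_id : ∀ n : ℕ, map (id : Fin n → Fin n) Function.surjective_id = id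
  map_comp : ∀ {r m n : ℕ} (f : Fin r → Fin m) (hf : Function.Surjective f)
    (g : Fin m → Fin n) (hg : Function.Surjective g),
    map (g ∘ f) (hg.comp hf) = map f hf ∘ map g hg

/-- `Fix(x) = 1`: the identity is the only permutation `σ` of `Fin n` with `X σ x = x`. -/
def SurjPresheaf.FixTrivial (X : SurjPresheaf) {n : ℕ} (x : X.obj n) : Prop :=
  ∀ σ : Equiv.Perm (Fin n), X.map ⇑σ σ.surjective x = x → σ = 1

/-- Condition (2): every element is the restriction of an element with trivial fixator. -/
def SurjPresheaf.Cond2 (X : SurjPresheaf) : Prop :=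
  ∀ (n : ℕ), 1 ≤ n → ∀ x : X.obj n,
    ∃ (m : ℕ) (_ : 1 ≤ m) (f : Fin n → Fin m) (hf : Function.Surjective f) (y : X.obj m),
      X.map f hf y = x ∧ X.FixTrivial y

/-- Condition (3): elements with trivial fixator having a common restriction differ
by a bijection. -/
def SurjPresheaf.Cond3 (X : SurjPresheaf) : Prop :=
  ∀ (k n m : ℕ), 1 ≤ k → ∀ (f : Fin k → Fin n) (hf : Function.Surjective f)
    (g : Fin k → Fin m) (hg : Function.Surjective g) (x : X.obj n) (y : X.obj m),
    X.map f hf x = X.map g hg y → X.FixTrivial x → X.FixTrivial y →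
    n = m ∧ ∃ σ : Fin n ≃ Fin m, ⇑σ ∘ f = g ∧ X.map ⇑σ σ.surjective y = x

/-- If a presheaf `X` on `Set_s^f` satisfies Conditions (2) and (3), then
for every surjection `f : Fin m → Fin n` the map `X f : X n → X m` is injective. -/
theorem SurjPresheaf.map_injective (X : SurjPresheaf) (h2 : X.Cond2) (h3 : X.Cond3)
    {m n : ℕ} (hm : 1 ≤ m) (f : Fin m → Fin n) (hf : Function.Surjective f) :
    Function.Injective (X.map f hf) := by
  intro x x' hxx'
  have hn : 1 ≤ n := (f ⟨0, hm⟩).pos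
  obtain ⟨p, hp, g, hg, y, hy, hyfix⟩ := h2 n hn x
  obtain ⟨q, hq, g', hg', y', hy', hy'fix⟩ := h2 n hn x'
  have key : X.map (g ∘ f) (hg.comp hf) y = X.map (g' ∘ f) (hg'.comp hf) y' := by
    rw [X.map_comp f hf g hg, X.map_comp f hf g' hg']
    show X.map f hf (X.map g hg y) = X.map f hf (X.map g' hg' y')
    rw [hy, hy', hxx']
  obtain ⟨hpq, σ, hσcomp, hσmap⟩ :=
    h3 m p q hm (g ∘ f) (hg.comp hf) (g' ∘ f) (hg'.comp hf) y y' key hyfix hy'fix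
  have hgg' : ⇑σ ∘ g = g' := by
    funext i
    obtain ⟨j, rfl⟩ := hf i
    exact congrFun hσcomp j
  subst hgg'
  calc x = X.map g hg y := hy.symm
    _ = X.map g hg (X.map ⇑σ σ.surjective y') := by rw [hσmap]
    _ = X.map (⇑σ ∘ g) (σ.surjective.comp hg) y' := by
          rw [X.map_comp g hg ⇑σ σ.surjective]; rfl
    _ = X.map (⇑σ ∘ g) hg' y' := rfl
    _ = x' := hy'
end

section
/- Let X be a presheaf on Set_s^f, let f : Fin n → Fin p be a surjection, let z ∈ X p and set x = X f z ∈ X n. If Fix(x) = 1, then f is bijective (so n = p). Equivalently: if x with Fix(x) = 1 lies in the range of X f, then every permutation τ of Fin n with f ∘ τ = f is the identity, and hence f is injective. -/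
/-- Let `X` be a presheaf on `Set_s^f`, `f : Fin n → Fin p` a surjection,
`z ∈ X p` and `x = X f z ∈ X n`. If `Fix(x) = 1`, then `f` is bijective (so `n = p`);
moreover every permutation `τ` of `Fin n` with `f ∘ τ = f` is the identity. -/
theorem SurjPresheaf.bijective_of_fixTrivial_range (X : SurjPresheaf)
    {n p : ℕ} (hn : 1 ≤ n) (f : Fin n → Fin p) (hf : Function.Surjective f)
    (z : X.obj p) (hx : X.FixTrivial (X.map f hf z)) :
    (∀ τ : Equiv.Perm (Fin n), f ∘ ⇑τ = f → τ = 1) ∧ Function.Bijective f ∧ n = p := by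
  have key : ∀ τ : Equiv.Perm (Fin n), f ∘ ⇑τ = f → τ = 1 := by
    intro τ hτ
    apply hx
    have := congrFun (X.map_comp ⇑τ τ.surjective f hf) z
    simp only [hτ] at this
    simpa using this.symm
  have hinj : Function.Injective f := by
    intro a b hab
    by_contra hne
    have : Equiv.swap a b = 1 := by
      apply key
      funext i
      simp only [Function.comp_apply]
      rcases eq_or_ne i a with rfl|ha
      · simpa using hab.symm
      rcases eq_or_ne i b with rfl|hb
      · simpa [Equiv.swap_apply_right] using hab
      · rw [Equiv.swap_apply_of_ne_of_ne ha hb]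
    exact hne (Equiv.swap_eq_one_iff.mp this)
  refine ⟨key, ⟨hinj, hf⟩, ?_⟩
  simpa using Fintype.card_of_bijective ⟨hinj, hf⟩
end

section
/- Let X be a presheaf on Set_s^f such that for every coequalizer diagram f, g : Fin k → Fin n, q : Fin n → Fin m in Set_s^f, the map X q : X m → X n is injective with range exactly {x ∈ X n | X f x = X g x}. Then X satisfies Condition (2): for every n ≥ 1 and every x ∈ X n there exist m ≥ 1, a surjection f : Fin n → Fin m and y ∈ X m with X f y = x and Fix(y) = 1. -/
/-- `q : Fin n → Fin m` is a coequalizer of `f, g : Fin k → Fin n` in `Set_s^f`: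
`q ∘ f = q ∘ g` and every surjection `p` with `p ∘ f = p ∘ g` factors uniquely through `q`
by a surjection. -/
def IsCoeq {k n m : ℕ} (f g : Fin k → Fin n) (q : Fin n → Fin m) : Prop :=
  q ∘ f = q ∘ g ∧
  ∀ (l : ℕ) (p : Fin n → Fin l), Function.Surjective p → p ∘ f = p ∘ g →
    ∃! r : {r : Fin m → Fin l // Function.Surjective r}, r.1 ∘ q = p

lemma exists_coeq_of_perm {n : ℕ} (hn : 1 ≤ n) (σ : Equiv.Perm (Fin n)) (hσ : σ ≠ 1) :
    ∃ (m : ℕ) (q : Fin n → Fin m), 1 ≤ m ∧ m < n ∧ Function.Surjective q ∧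
      IsCoeq (id : Fin n → Fin n) ⇑σ q := by
  classical
  let s : Setoid (Fin n) := Relation.EqvGen.setoid (fun i j => σ i = j)
  haveI : Fintype (Quotient s) := Quotient.fintype s
  set m := Fintype.card (Quotient s) with hm
  let e : Quotient s ≃ Fin m := Fintype.equivFin _
  let q : Fin n → Fin m := fun i => e (Quotient.mk s i)
  have hmk : ∀ i : Fin n, Quotient.mk s i = Quotient.mk s (σ i) := fun i =>
    Quotient.sound (Relation.EqvGen.rel i (σ i) rfl)
  have hq : Function.Surjective q := by
    intro b
    obtain ⟨a, ha⟩ := Quotient.exists_rep (e.symm b)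
    exact ⟨a, by simp [q, ha]⟩
  have hmksurj : Function.Surjective (Quotient.mk s : Fin n → Quotient s) :=
    fun y => Quotient.exists_rep y
  have hmkni : ¬ Function.Injective (Quotient.mk s : Fin n → Quotient s) := by
    intro hinj
    exact hσ (Equiv.ext fun i => show σ i = i from (hinj (hmk i)).symm)
  have hlt : m < n := by
    have := Fintype.card_lt_of_surjective_not_injective _ hmksurj hmkni
    simpa [hm] using this
  have hm1 : 1 ≤ m := by
    have : Nonempty (Quotient s) := ⟨Quotient.mk s ⟨0, hn⟩⟩
    exact Fintype.card_pos
  refine ⟨m, q, hm1, hlt, hq, ?_, ?_⟩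
  · funext i
    simp only [Function.comp_apply, id_eq, q]
    rw [hmk i]
  · intro l p hp hpeq
    have hlift : ∀ a b : Fin n, Relation.EqvGen (fun i j => σ i = j) a b → p a = p b := by
      intro a b h
      induction h with
      | rel a b hab => rw [← hab]; exact congrFun hpeq a
      | refl => rfl
      | symm _ _ _ ih => exact ih.symm
      | trans _ _ _ _ _ ih1 ih2 => exact ih1.trans ih2
    let r0 : Quotient s → Fin l := Quotient.lift p hlift
    let r : Fin m → Fin l := r0 ∘ e.symm
    have hrq : r ∘ q = p := by
      funext i
      simp [r, r0, q]
    have hrsurj : Function.Surjective r := by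
      intro b
      obtain ⟨a, ha⟩ := hp b
      refine ⟨q a, ?_⟩
      rw [show r (q a) = p a from congrFun hrq a, ha]
    refine ⟨⟨r, hrsurj⟩, hrq, ?_⟩
    rintro ⟨r', hr'⟩ hr'q
    ext b : 2
    obtain ⟨a, ha⟩ := hq b
    subst ha
    show r' (q a) = r (q a)
    rw [show r' (q a) = p a from congrFun hr'q a, show r (q a) = p a from congrFun hrq a]

/-- If a presheaf `X` on `Set_s^f` sends every coequalizer diagram of
`Set_s^f` to an equalizer in `Set` (i.e. `X q` is injective with range
`{x | X f x = X g x}`), then `X` satisfies Condition (2). -/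
theorem SurjPresheaf.cond2_of_preserves_coeq (X : SurjPresheaf)
    (hcq : ∀ (k n m : ℕ), 1 ≤ k →
      ∀ (f g : Fin k → Fin n) (hf : Function.Surjective f) (hg : Function.Surjective g)
        (q : Fin n → Fin m) (hq : Function.Surjective q), IsCoeq f g q →
        Function.Injective (X.map q hq) ∧
        Set.range (X.map q hq) = {x : X.obj n | X.map f hf x = X.map g hg x}) :
    X.Cond2 := by
  intro n
  induction n using Nat.strong_induction_on with
  | _ n ih =>
    intro hn x
    by_cases hx : X.FixTrivial x
    · refine ⟨n, hn, id, Function.surjective_id, x, ?_, hx⟩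
      rw [X.map_id n]
      rfl
    · simp only [SurjPresheaf.FixTrivial, not_forall] at hx
      obtain ⟨σ, hσx, hσ1⟩ := hx
      obtain ⟨m, q, hm1, hlt, hq, hcoeq⟩ := exists_coeq_of_perm hn σ hσ1
      obtain ⟨hinj, hrange⟩ := hcq n n m hn id ⇑σ Function.surjective_id σ.surjective q hq hcoeq
      have hxmem : x ∈ Set.range (X.map q hq) := by
        rw [hrange]
        show X.map id Function.surjective_id x = X.map ⇑σ σ.surjective x
        rw [X.map_id n, hσx]
        rfl
      obtain ⟨y, hy⟩ := hxmem
      obtain ⟨m', hm', g, hg, z, hz, hfix⟩ := ih m hlt hm1 y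
      refine ⟨m', hm', g ∘ q, hg.comp hq, z, ?_, hfix⟩
      rw [X.map_comp q hq g hg]
      simp only [Function.comp_apply, hz, hy]
end

section
/- Let X be a presheaf on Set_s^f such that for every pushout square f : Fin k → Fin n, g : Fin k → Fin m, f' : Fin n → Fin p, g' : Fin m → Fin p in Set_s^f and all x ∈ X n, y ∈ X m with X f x = X g y, there exists z ∈ X p with X f' z = x and X g' z = y. Then X satisfies Condition (3): for all surjections f : Fin k → Fin n and g : Fin k → Fin m, and all x ∈ X n, y ∈ X m with X f x = X g y, Fix(x) = 1 and Fix(y) = 1, one has n = m and there exists a bijection σ : Fin n → Fin m with σ ∘ f = g and X σ y = x. -/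
/-- `f' : Fin n → Fin p`, `g' : Fin m → Fin p` form a pushout of `f : Fin k → Fin n`,
`g : Fin k → Fin m` in `Set_s^f`. -/
def IsPushout {k n m p : ℕ} (f : Fin k → Fin n) (g : Fin k → Fin m)
    (f' : Fin n → Fin p) (g' : Fin m → Fin p) : Prop :=
  f' ∘ f = g' ∘ g ∧
  ∀ (l : ℕ) (u : Fin n → Fin l) (v : Fin m → Fin l),
    Function.Surjective u → Function.Surjective v → u ∘ f = v ∘ g →
    ∃! w : {w : Fin p → Fin l // Function.Surjective w}, w.1 ∘ f' = u ∧ w.1 ∘ g' = v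


theorem exists_pushout {k n m : ℕ} (f : Fin k → Fin n) (hf : Function.Surjective f)
    (g : Fin k → Fin m) (hg : Function.Surjective g) :
    ∃ (p : ℕ) (f' : Fin n → Fin p) (g' : Fin m → Fin p),
      Function.Surjective f' ∧ Function.Surjective g' ∧ IsPushout f g f' g' := by
  classical
  set R : Fin k → Fin k → Prop := fun i j => f i = f j ∨ g i = g j with hR
  obtain ⟨p, ⟨e⟩⟩ := Finite.exists_equiv_fin (Quot R)
  set f' : Fin n → Fin p := fun a => e (Quot.mk R (Function.surjInv hf a)) with hf'def
  set g' : Fin m → Fin p := fun b => e (Quot.mk R (Function.surjInv hg b)) with hg'def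
  have hff : ∀ i, f' (f i) = e (Quot.mk R i) := fun i =>
    congrArg e (Quot.sound (Or.inl (Function.surjInv_eq hf (f i))))
  have hgg : ∀ i, g' (g i) = e (Quot.mk R i) := fun i =>
    congrArg e (Quot.sound (Or.inr (Function.surjInv_eq hg (g i))))
  have hf' : Function.Surjective f' := by
    intro c
    obtain ⟨i, hi⟩ := Quot.exists_rep (e.symm c)
    exact ⟨f i, by rw [hff i, hi, e.apply_symm_apply]⟩
  have hg' : Function.Surjective g' := by
    intro c
    obtain ⟨i, hi⟩ := Quot.exists_rep (e.symm c)
    exact ⟨g i, by rw [hgg i, hi, e.apply_symm_apply]⟩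
  refine ⟨p, f', g', hf', hg', funext fun i => (hff i).trans (hgg i).symm, ?_⟩
  intro l u v hu hv huv
  have resp : ∀ i j, R i j → u (f i) = u (f j) := by
    intro i j hij
    rcases hij with h | h
    · exact congrArg u h
    · calc u (f i) = v (g i) := congrFun huv i
        _ = v (g j) := congrArg v h
        _ = u (f j) := (congrFun huv j).symm
  set w : Fin p → Fin l := fun c => Quot.lift (u ∘ f) resp (e.symm c) with hwdef
  have hwf : ∀ a, w (f' a) = u a := by
    intro a
    obtain ⟨i, rfl⟩ := hf a
    rw [hff i, hwdef]
    simp only [e.symm_apply_apply]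
    rfl
  have hwg : ∀ b, w (g' b) = v b := by
    intro b
    obtain ⟨i, rfl⟩ := hg b
    rw [hgg i, hwdef]
    simp only [e.symm_apply_apply]
    exact (congrFun huv i)
  have hwsurj : Function.Surjective w := by
    intro c
    obtain ⟨a, rfl⟩ := hu c
    exact ⟨f' a, hwf a⟩
  refine ⟨⟨w, hwsurj⟩, ⟨funext hwf, funext hwg⟩, ?_⟩
  rintro ⟨w', hw'⟩ ⟨h1, h2⟩
  apply Subtype.ext
  funext c
  obtain ⟨a, rfl⟩ := hf' c
  exact (congrFun h1 a).trans (hwf a).symm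

theorem SurjPresheaf.map_congr (X : SurjPresheaf) {a b : ℕ} {k1 k2 : Fin a → Fin b}
    (h1 : Function.Surjective k1) (h2 : Function.Surjective k2) (heq : k1 = k2)
    (w : X.obj b) : X.map k1 h1 w = X.map k2 h2 w := by subst heq; rfl

theorem SurjPresheaf.inj_of_fixTrivial (X : SurjPresheaf) {n q : ℕ}
    (h : Fin n → Fin q) (hh : Function.Surjective h) (z : X.obj q) (x : X.obj n)
    (hzx : X.map h hh z = x) (hx : X.FixTrivial x) : Function.Injective h := by
  intro a b hab
  by_contra hne
  set τ : Equiv.Perm (Fin n) := Equiv.swap a b with hτ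
  have hcomp : h ∘ ⇑τ = h := by
    funext c
    rcases eq_or_ne c a with rfl | hca
    · simp [hτ, Equiv.swap_apply_left, hab]
    rcases eq_or_ne c b with rfl | hcb
    · simp [hτ, Equiv.swap_apply_right, hab]
    · simp [hτ, Equiv.swap_apply_of_ne_of_ne hca hcb]
  have hfix : X.map ⇑τ τ.surjective x = x := by
    rw [← hzx]
    have h1 := congrFun (X.map_comp ⇑τ τ.surjective h hh) z
    simp only [Function.comp_apply] at h1
    rw [← h1]
    exact X.map_congr _ hh hcomp z
  have hone := hx τ hfix
  apply hne
  have : τ a = a := by rw [hone]; rfl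
  rw [hτ, Equiv.swap_apply_left] at this
  exact this.symm

/-- If a presheaf `X` on `Set_s^f` sends every pushout square of `Set_s^f`
to a (weak) pullback in `Set` (i.e. whenever `X f x = X g y` there is `z` with
`X f' z = x` and `X g' z = y`), then `X` satisfies Condition (3). -/
theorem SurjPresheaf.cond3_of_preserves_pushouts (X : SurjPresheaf)
    (hpo : ∀ (k n m p : ℕ), 1 ≤ k →
      ∀ (f : Fin k → Fin n) (hf : Function.Surjective f)
        (g : Fin k → Fin m) (hg : Function.Surjective g)
        (f' : Fin n → Fin p) (hf' : Function.Surjective f')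
        (g' : Fin m → Fin p) (hg' : Function.Surjective g'),
        IsPushout f g f' g' →
        ∀ (x : X.obj n) (y : X.obj m), X.map f hf x = X.map g hg y →
          ∃ z : X.obj p, X.map f' hf' z = x ∧ X.map g' hg' z = y) :
    X.Cond3 := by
  intro k n m hk f hf g hg x y hxy hx hy
  obtain ⟨p, f', g', hf', hg', hPO⟩ := exists_pushout f hf g hg
  obtain ⟨z, hzx, hzy⟩ := hpo k n m p hk f hf g hg f' hf' g' hg' hPO x y hxy
  have hfinj : Function.Injective f' := X.inj_of_fixTrivial f' hf' z x hzx hx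
  have hginj : Function.Injective g' := X.inj_of_fixTrivial g' hg' z y hzy hy
  set F : Fin n ≃ Fin p := Equiv.ofBijective f' ⟨hfinj, hf'⟩ with hF
  set G : Fin m ≃ Fin p := Equiv.ofBijective g' ⟨hginj, hg'⟩ with hG
  have hnp : n = p := by
    simpa using Fintype.card_of_bijective (f := f') ⟨hfinj, hf'⟩
  have hmp : m = p := by
    simpa using Fintype.card_of_bijective (f := g') ⟨hginj, hg'⟩
  refine ⟨hnp.trans hmp.symm, F.trans G.symm, ?_, ?_⟩
  · funext i
    show G.symm (F (f i)) = g i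
    rw [Equiv.symm_apply_eq]
    exact congrFun hPO.1 i
  · have hGy : X.map ⇑G.symm G.symm.surjective y = z := by
      rw [← hzy]
      have h1 := congrFun (X.map_comp ⇑G.symm G.symm.surjective g' hg') z
      simp only [Function.comp_apply] at h1
      rw [← h1]
      have h2 : g' ∘ ⇑G.symm = id := by
        funext c
        exact G.apply_symm_apply c
      rw [X.map_congr _ Function.surjective_id h2 z, X.map_id]
      rfl
    have h3 := congrFun (X.map_comp ⇑F F.surjective ⇑G.symm G.symm.surjective) y
    simp only [Function.comp_apply] at h3
    calc X.map ⇑(F.trans G.symm) (F.trans G.symm).surjective y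
        = X.map (⇑G.symm ∘ ⇑F) (G.symm.surjective.comp F.surjective) y :=
          X.map_congr _ _ (Equiv.coe_trans F G.symm) y
      _ = X.map ⇑F F.surjective (X.map ⇑G.symm G.symm.surjective y) := h3
      _ = X.map ⇑F F.surjective z := by rw [hGy]
      _ = X.map f' hf' z := X.map_congr _ _ rfl z
      _ = x := hzx
end

section
/- Let X be a presheaf on Set_s^f satisfying Conditions (2) and (3), and let f, g : Fin k → Fin n, q : Fin n → Fin m be a coequalizer diagram in Set_s^f. Then X q : X m → X n is injective and its range is exactly {x ∈ X n | X f x = X g x}. -/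
theorem SurjPresheaf.map_congr_s5 (X : SurjPresheaf) {a b : ℕ} {f f' : Fin a → Fin b}
    (h : f = f') (hf : Function.Surjective f) (hf' : Function.Surjective f')
    (x : X.obj b) : X.map f hf x = X.map f' hf' x := by subst h; rfl

/-- If a presheaf `X` on `Set_s^f` satisfies Conditions (2) and (3), then
`X` sends every coequalizer diagram `f, g : Fin k → Fin n`, `q : Fin n → Fin m` of
`Set_s^f` to an equalizer in `Set`: `X q` is injective with range
`{x ∈ X n | X f x = X g x}`. -/
theorem SurjPresheaf.preserves_coeq_of_cond2_cond3 (X : SurjPresheaf)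
    (h2 : X.Cond2) (h3 : X.Cond3)
    {k n m : ℕ} (hk : 1 ≤ k) (f g : Fin k → Fin n)
    (hf : Function.Surjective f) (hg : Function.Surjective g)
    (q : Fin n → Fin m) (hq : Function.Surjective q) (hcoeq : IsCoeq f g q) :
    Function.Injective (X.map q hq) ∧
    Set.range (X.map q hq) = {x : X.obj n | X.map f hf x = X.map g hg x} := by
  obtain ⟨hqfg, hcofac⟩ := hcoeq
  have hn : 0 < n := Fin.pos (f ⟨0, hk⟩)
  have hm : 0 < m := Fin.pos (q ⟨0, hn⟩)
  constructor
  · intro y y' hyy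
    obtain ⟨l, hl, p, hp, z, hz, hfix⟩ := h2 m hm y
    obtain ⟨l', hl', p', hp', z', hz', hfix'⟩ := h2 m hm y'
    have key : X.map (p ∘ q) (hp.comp hq) z = X.map (p' ∘ q) (hp'.comp hq) z' := by
      rw [X.map_comp q hq p hp, X.map_comp q hq p' hp']
      simp only [Function.comp_apply, hz, hz', hyy]
    obtain ⟨hll, σ, hσcomm, hσz⟩ := h3 n l l' hn (p ∘ q) (hp.comp hq) (p' ∘ q)
      (hp'.comp hq) z z' key hfix hfix'
    have hpp : ⇑σ ∘ p = p' := by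
      funext i
      obtain ⟨j, rfl⟩ := hq i
      exact congrFun hσcomm j
    subst hpp
    calc y = X.map p hp z := hz.symm
      _ = X.map p hp (X.map ⇑σ σ.surjective z') := by rw [hσz]
      _ = X.map (⇑σ ∘ p) (σ.surjective.comp hp) z' := by
          rw [X.map_comp p hp ⇑σ σ.surjective]; rfl
      _ = y' := by
          rw [← hz']
  · ext x
    constructor
    · rintro ⟨y, rfl⟩
      show X.map f hf (X.map q hq y) = X.map g hg (X.map q hq y)
      calc X.map f hf (X.map q hq y) = X.map (q ∘ f) (hq.comp hf) y :=
            (congrFun (X.map_comp f hf q hq) y).symm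
        _ = X.map (q ∘ g) (hq.comp hg) y := X.map_congr_s5 hqfg _ _ y
        _ = X.map g hg (X.map q hq y) := congrFun (X.map_comp g hg q hq) y
    · intro hx
      have hx : X.map f hf x = X.map g hg x := hx
      obtain ⟨l, hl, p, hp, z, hz, hfix⟩ := h2 n hn x
      have key : X.map (p ∘ f) (hp.comp hf) z = X.map (p ∘ g) (hp.comp hg) z := by
        rw [X.map_comp f hf p hp, X.map_comp g hg p hp]
        simp only [Function.comp_apply, hz, hx]
      obtain ⟨-, σ, hσcomm, hσz⟩ := h3 k l l hk (p ∘ f) (hp.comp hf) (p ∘ g)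
        (hp.comp hg) z z key hfix hfix
      have hσ1 : σ = 1 := hfix σ hσz
      have hpfg : p ∘ f = p ∘ g := by
        rw [hσ1] at hσcomm
        simpa using hσcomm
      obtain ⟨⟨r, hr⟩, hrq, -⟩ := hcofac l p hp hpfg
      refine ⟨X.map r hr z, ?_⟩
      calc X.map q hq (X.map r hr z) = X.map (r ∘ q) (hr.comp hq) z :=
            (congrFun (X.map_comp q hq r hr) z).symm
        _ = X.map p hp z := X.map_congr_s5 hrq _ _ z
        _ = x := hz
end

section
/- Let X be a presheaf on Set_s^f satisfying Conditions (2) and (3), and let f : Fin k → Fin n, g : Fin k → Fin m, f' : Fin n → Fin p, g' : Fin m → Fin p be a pushout square in Set_s^f. Then for all x ∈ X n and y ∈ X m with X f x = X g y, there exists a unique z ∈ X p with X f' z = x and X g' z = y. -/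
namespace SurjPresheaf

lemma map_map (X : SurjPresheaf) {r m n : ℕ} (f : Fin r → Fin m) (hf : Function.Surjective f)
    (g : Fin m → Fin n) (hg : Function.Surjective g) (x : X.obj n) :
    X.map f hf (X.map g hg x) = X.map (g ∘ f) (hg.comp hf) x :=
  (congrFun (X.map_comp f hf g hg) x).symm

lemma map_congr_s6 (X : SurjPresheaf) {m n : ℕ} {f g : Fin m → Fin n} (h : f = g)
    (hf : Function.Surjective f) (x : X.obj n) :
    X.map f hf x = X.map g (h ▸ hf) x := by subst h; rfl

lemma map_symm_map (X : SurjPresheaf) {a b : ℕ} (σ : Fin a ≃ Fin b) (y : X.obj b) :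
    X.map ⇑σ.symm σ.symm.surjective (X.map ⇑σ σ.surjective y) = y := by
  rw [X.map_map, X.map_congr_s6 σ.self_comp_symm, X.map_id]
  rfl

end SurjPresheaf

/-- If a presheaf `X` on `Set_s^f` satisfies Conditions (2) and (3), then
`X` sends every pushout square of `Set_s^f` to a pullback in `Set`: whenever
`X f x = X g y`, there is a unique `z ∈ X p` with `X f' z = x` and `X g' z = y`. -/
theorem SurjPresheaf.preserves_pushout_of_cond2_cond3 (X : SurjPresheaf)
    (h2 : X.Cond2) (h3 : X.Cond3)
    {k n m p : ℕ} (hk : 1 ≤ k)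
    (f : Fin k → Fin n) (hf : Function.Surjective f)
    (g : Fin k → Fin m) (hg : Function.Surjective g)
    (f' : Fin n → Fin p) (hf' : Function.Surjective f')
    (g' : Fin m → Fin p) (hg' : Function.Surjective g')
    (hpo : IsPushout f g f' g')
    (x : X.obj n) (y : X.obj m) (hxy : X.map f hf x = X.map g hg y) :
    ∃! z : X.obj p, X.map f' hf' z = x ∧ X.map g' hg' z = y := by
  obtain ⟨hcommpo, huniv⟩ := hpo
  have hn : 1 ≤ n := Fin.pos (f ⟨0, hk⟩)
  have hm : 1 ≤ m := Fin.pos (g ⟨0, hk⟩)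
  have hp : 1 ≤ p := Fin.pos (f' ⟨0, hn⟩)
  -- uniqueness
  have key : ∀ z z' : X.obj p, X.map f' hf' z = x → X.map g' hg' z = y →
      X.map f' hf' z' = x → X.map g' hg' z' = y → z = z' := by
    intro z z' hz1 hz2 hz1' hz2'
    obtain ⟨c, hc, w1, hw1, t1, ht1, hfix1⟩ := h2 p hp z
    obtain ⟨c', hc', w2, hw2, t2, ht2, hfix2⟩ := h2 p hp z'
    have e1 : X.map (w1 ∘ f') (hw1.comp hf') t1 = X.map (w2 ∘ f') (hw2.comp hf') t2 := by
      rw [← X.map_map f' hf' w1 hw1, ← X.map_map f' hf' w2 hw2, ht1, ht2, hz1, hz1']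
    have e2 : X.map (w1 ∘ g') (hw1.comp hg') t1 = X.map (w2 ∘ g') (hw2.comp hg') t2 := by
      rw [← X.map_map g' hg' w1 hw1, ← X.map_map g' hg' w2 hw2, ht1, ht2, hz2, hz2']
    obtain ⟨hcc, σ, hσf, hσt⟩ := h3 n c c' hn (w1 ∘ f') (hw1.comp hf') (w2 ∘ f')
      (hw2.comp hf') t1 t2 e1 hfix1 hfix2
    subst hcc
    obtain ⟨-, τ, hτg, hτt⟩ := h3 m c c hm (w1 ∘ g') (hw1.comp hg') (w2 ∘ g')
      (hw2.comp hg') t1 t2 e2 hfix1 hfix2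
    -- show σ = τ using trivial fixator of t2
    have hfixeq : X.map ⇑(τ.symm.trans σ) (τ.symm.trans σ).surjective t2 = t2 := by
      rw [X.map_congr_s6 (Equiv.coe_trans τ.symm σ), ← X.map_map _ τ.symm.surjective _ σ.surjective, hσt, ← hτt,
        X.map_symm_map]
    have hστ : σ = τ := by
      have h1 : τ.symm.trans σ = 1 := hfix2 (τ.symm.trans σ) hfixeq
      have := congrArg (fun e => τ.trans e) h1
      simpa [← Equiv.trans_assoc, Equiv.Perm.one_def, Equiv.trans_refl] using this
    -- pushout uniqueness gives ⇑σ ∘ w1 = w2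
    have hcomm3 : (w2 ∘ f') ∘ f = (w2 ∘ g') ∘ g := by
      rw [Function.comp_assoc, Function.comp_assoc, hcommpo]
    obtain ⟨W, -, hWuniq⟩ := huniv c (w2 ∘ f') (w2 ∘ g') (hw2.comp hf') (hw2.comp hg') hcomm3
    have hA := hWuniq ⟨w2, hw2⟩ ⟨rfl, rfl⟩
    have hB := hWuniq ⟨⇑σ ∘ w1, σ.surjective.comp hw1⟩
      ⟨by rw [Function.comp_assoc]; exact hσf, by rw [Function.comp_assoc, hστ]; exact hτg⟩
    have hw12 : ⇑σ ∘ w1 = w2 := by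
      have := hB.trans hA.symm
      exact congrArg Subtype.val this
    rw [← ht1, ← ht2, ← hσt, X.map_map, X.map_congr_s6 hw12]
  -- existence
  obtain ⟨a, ha, u, hu, x1, hux1, hfixx⟩ := h2 n hn x
  obtain ⟨b, hb, v, hv, y1, hvy1, hfixy⟩ := h2 m hm y
  have heq : X.map (u ∘ f) (hu.comp hf) x1 = X.map (v ∘ g) (hv.comp hg) y1 := by
    rw [← X.map_map f hf u hu, ← X.map_map g hg v hv, hux1, hvy1, hxy]
  obtain ⟨hab, σ, hσf, hσy⟩ := h3 k a b hk (u ∘ f) (hu.comp hf) (v ∘ g) (hv.comp hg)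
    x1 y1 heq hfixx hfixy
  subst hab
  have hcomm2 : u ∘ f = (⇑σ.symm ∘ v) ∘ g := by
    funext i
    have := congrFun hσf i
    simp only [Function.comp_apply] at this ⊢
    rw [← this, Equiv.symm_apply_apply]
  obtain ⟨⟨w, hw⟩, ⟨hwf, hwg⟩, -⟩ := huniv a u (⇑σ.symm ∘ v) hu
    (σ.symm.surjective.comp hv) hcomm2
  refine ⟨X.map w hw x1, ⟨?_, ?_⟩, fun z' hz' => key z' (X.map w hw x1) hz'.1 hz'.2 ?_ ?_⟩
  · rw [X.map_map, X.map_congr_s6 hwf]; exact hux1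
  · rw [X.map_map, X.map_congr_s6 hwg, ← X.map_map _ hv _ σ.symm.surjective, ← hσy, X.map_symm_map]; exact hvy1
  · rw [X.map_map, X.map_congr_s6 hwf]; exact hux1
  · rw [X.map_map, X.map_congr_s6 hwg, ← X.map_map _ hv _ σ.symm.surjective, ← hσy, X.map_symm_map]; exact hvy1
end

section
/- Let X be a presheaf on Set_s^f satisfying Conditions (2) and (3). For each m ≥ 1 let Y_m = {y ∈ X m | Fix(y) = 1} with the free S_m-action σ • y = X σ⁻¹ y, and let L_m be the canonical lifting of this action. Then for every n ≥ 1, the map from the disjoint union over m ≥ 1 of L_m n to X n, sending a class [y, q] (y ∈ Y_m, q : Fin n → Fin m surjective) to X q y, is a bijection. In particular X is, levelwise, the disjoint union of the canonical liftings of the free parts of its symmetric group actions. -/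
/-- The identification `(y, q) ∼ (σ • y, σ ∘ q)` (where `σ • y = X σ⁻¹ y`) on pairs of an
element `y ∈ Y_m = {y ∈ X m | Fix(y) = 1}` and a surjection `q : Fin n → Fin m`. -/
def SurjPresheaf.lrel (X : SurjPresheaf) (m n : ℕ) :
    ({y : X.obj m // X.FixTrivial y} × {q : Fin n → Fin m // Function.Surjective q}) →
    ({y : X.obj m // X.FixTrivial y} × {q : Fin n → Fin m // Function.Surjective q}) →
    Prop :=
  fun a b => ∃ σ : Equiv.Perm (Fin m),
    b.1.1 = X.map ⇑σ⁻¹ σ⁻¹.surjective a.1.1 ∧ b.2.1 = ⇑σ ∘ a.2.1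

/-- Level `n` of the canonical lifting of the free `S_m`-action on
`Y_m = {y ∈ X m | Fix(y) = 1}`. -/
def SurjPresheaf.Lm (X : SurjPresheaf) (m n : ℕ) : Type := Quot (X.lrel m n)

/-- The comparison map from the canonical lifting of the free part `Y_m` into `X`,
sending the class `[y, q]` to `X q y ∈ X n`. -/
def SurjPresheaf.toX (X : SurjPresheaf) (m n : ℕ) : X.Lm m n → X.obj n :=
  Quot.lift (fun a => X.map a.2.1 a.2.2 a.1.1)
    (by
      rintro ⟨⟨y, hy⟩, ⟨q, hq⟩⟩ ⟨⟨y', hy'⟩, ⟨q', hq'⟩⟩ ⟨σ, h1, h2⟩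
      simp only at h1 h2 ⊢
      subst h1 h2
      have mc : ∀ {a b : ℕ} {u v : Fin a → Fin b} (h : u = v)
          (hu : Function.Surjective u) (hv : Function.Surjective v),
          X.map u hu = X.map v hv := by
        intro a b u v h hu hv; subst h; rfl
      have h7 : (⇑σ⁻¹ ∘ ⇑σ : Fin m → Fin m) = id := by ext i; simp
      have h8 : X.map (⇑σ⁻¹ ∘ ⇑σ) (σ⁻¹.surjective.comp σ.surjective) y = y := by
        rw [mc h7 (σ⁻¹.surjective.comp σ.surjective) Function.surjective_id, X.map_id]
        rfl
      have h9 : X.map (⇑σ ∘ q) hq' = X.map q hq ∘ X.map ⇑σ σ.surjective :=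
        X.map_comp q hq (⇑σ) σ.surjective
      have h10 : X.map ⇑σ σ.surjective (X.map ⇑σ⁻¹ σ⁻¹.surjective y) =
          X.map (⇑σ⁻¹ ∘ ⇑σ) (σ⁻¹.surjective.comp σ.surjective) y :=
        (congrFun (X.map_comp (⇑σ) σ.surjective (⇑σ⁻¹) σ⁻¹.surjective) y).symm
      rw [h9]
      simp only [Function.comp_apply]
      rw [h10, h8])

/-- If a presheaf `X` on `Set_s^f` satisfies Conditions (2) and (3),
then for every `n ≥ 1` the map from the disjoint union, over `m ≥ 1`, of the levels `n`
of the canonical liftings of the free parts `Y_m = {y ∈ X m | Fix(y) = 1}` to `X n`,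
`[y, q] ↦ X q y`, is a bijection: levelwise, `X` is the disjoint union of the canonical
liftings of the free parts of its symmetric group actions. -/
theorem SurjPresheaf.disjoint_union_of_canLifts (X : SurjPresheaf)
    (h2 : X.Cond2) (h3 : X.Cond3) (n : ℕ) (hn : 1 ≤ n) :
    Function.Bijective
      (fun ξ : Σ m : {m : ℕ // 1 ≤ m}, X.Lm m.1 n => X.toX ξ.1.1 n ξ.2) := by
  have mc : ∀ {a b : ℕ} {u v : Fin a → Fin b} (h : u = v)
      (hu : Function.Surjective u) (hv : Function.Surjective v),
      X.map u hu = X.map v hv := by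
    intro a b u v h hu hv; subst h; rfl
  constructor
  · rintro ⟨⟨m, hm⟩, a⟩ ⟨⟨m', hm'⟩, b⟩ h
    obtain ⟨⟨⟨y, hy⟩, ⟨q, hq⟩⟩, rfl⟩ := Quot.exists_rep a
    obtain ⟨⟨⟨y', hy'⟩, ⟨q', hq'⟩⟩, rfl⟩ := Quot.exists_rep b
    have h' : X.map q hq y = X.map q' hq' y' := h
    obtain ⟨hmm', σ, hσq, hσy⟩ := h3 n m m' hn q hq q' hq' y y' h' hy hy'
    subst hmm'
    have hy'' : y' = X.map ⇑σ⁻¹ σ⁻¹.surjective y := by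
      rw [← hσy]
      have := congrFun (X.map_comp (⇑σ⁻¹) σ⁻¹.surjective (⇑σ) σ.surjective) y'
      simp only [Function.comp_apply] at this
      rw [← this]
      have h7 : (⇑σ ∘ ⇑σ⁻¹ : Fin m → Fin m) = id := by ext i; simp
      rw [mc h7 _ Function.surjective_id, X.map_id]
      rfl
    have hq'' : q' = ⇑σ ∘ q := hσq.symm
    have : (Quot.mk (X.lrel m n) (⟨y, hy⟩, ⟨q, hq⟩) : X.Lm m n)
        = Quot.mk (X.lrel m n) (⟨y', hy'⟩, ⟨q', hq'⟩) :=
      Quot.sound (show X.lrel m n (⟨y, hy⟩, ⟨q, hq⟩) (⟨y', hy'⟩, ⟨q', hq'⟩) from ⟨σ, hy'', hq''⟩)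
    exact congrArg (fun z => (⟨⟨m, hm⟩, z⟩ : Σ m : {m : ℕ // 1 ≤ m}, X.Lm m.1 n)) this
  · intro x
    obtain ⟨m, hm, f, hf, y, hfy, hy⟩ := h2 n hn x
    exact ⟨⟨⟨m, hm⟩, Quot.mk _ (⟨y, hy⟩, ⟨f, hf⟩)⟩, hfy⟩
end

section
/- Pushouts exist in Set_s^f: for all surjections f : Fin k → Fin n and g : Fin k → Fin m there exist p ≥ 1 and surjections f' : Fin n → Fin p, g' : Fin m → Fin p with f' ∘ f = g' ∘ g, such that for all surjections u : Fin n → Fin l and v : Fin m → Fin l with u ∘ f = v ∘ g there is a unique surjection w : Fin p → Fin l with w ∘ f' = u and w ∘ g' = v. -/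
/-- Pushouts exist in `Set_s^f`: for all surjections
`f : Fin k → Fin n` and `g : Fin k → Fin m` there are `p ≥ 1` and surjections
`f' : Fin n → Fin p`, `g' : Fin m → Fin p` with `f' ∘ f = g' ∘ g`, such that for all
surjections `u : Fin n → Fin l`, `v : Fin m → Fin l` with `u ∘ f = v ∘ g` there is a
unique surjection `w : Fin p → Fin l` with `w ∘ f' = u` and `w ∘ g' = v`. -/
theorem setSurjFin_pushouts_exist {k n m : ℕ} (hk : 1 ≤ k)
    (f : Fin k → Fin n) (g : Fin k → Fin m)
    (hf : Function.Surjective f) (hg : Function.Surjective g) :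
    ∃ (p : ℕ) (f' : Fin n → Fin p) (g' : Fin m → Fin p), 1 ≤ p ∧
      Function.Surjective f' ∧ Function.Surjective g' ∧ f' ∘ f = g' ∘ g ∧
      ∀ (l : ℕ) (u : Fin n → Fin l) (v : Fin m → Fin l),
        Function.Surjective u → Function.Surjective v → u ∘ f = v ∘ g →
        ∃! w : {w : Fin p → Fin l // Function.Surjective w},
          w.1 ∘ f' = u ∧ w.1 ∘ g' = v := by
  classical
  -- the relation generating the pushout identifications
  set r : Fin n → Fin n → Prop :=
    fun a b => ∃ x x' : Fin k, f x = a ∧ f x' = b ∧ g x = g x' with hr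
  let s : Setoid (Fin n) := Relation.EqvGen.setoid r
  haveI : Fintype (Quotient s) := Fintype.ofSurjective (Quotient.mk s)
    (fun q => Quotient.exists_rep q)
  let p := Fintype.card (Quotient s)
  let e : Quotient s ≃ Fin p := Fintype.equivFin _
  let f' : Fin n → Fin p := fun a => e (Quotient.mk s a)
  have hf' : Function.Surjective f' := fun q => by
    obtain ⟨a, ha⟩ := Quotient.exists_rep (e.symm q)
    exact ⟨a, by simp [f', ha]⟩
  -- choose preimages under g
  let sec : Fin m → Fin k := fun b => (hg b).choose
  have hsec : ∀ b, g (sec b) = b := fun b => (hg b).choose_spec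
  let g' : Fin m → Fin p := fun b => f' (f (sec b))
  have key : ∀ x : Fin k, f' (f x) = g' (g x) := by
    intro x
    have : r (f x) (f (sec (g x))) := ⟨x, sec (g x), rfl, rfl, (hsec (g x)).symm⟩
    simpa [f', g'] using congrArg e (Quotient.sound (Relation.EqvGen.rel _ _ this))
  have hcomm : f' ∘ f = g' ∘ g := funext key
  have hg' : Function.Surjective g' := fun q => by
    obtain ⟨a, ha⟩ := hf' q
    obtain ⟨x, hx⟩ := hf a
    exact ⟨g x, by rw [← key x, hx, ha]⟩
  have hn : 0 < n := (f ⟨0, hk⟩).pos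
  have hp : 1 ≤ p := (f' (f ⟨0, hk⟩)).pos
  refine ⟨p, f', g', hp, hf', hg', hcomm, ?_⟩
  intro l u v hu hv huv
  -- u respects the equivalence relation
  have resp : ∀ a b : Fin n, Relation.EqvGen r a b → u a = u b := by
    intro a b h
    induction h with
    | rel a b hab =>
        obtain ⟨x, x', hx, hx', hxx'⟩ := hab
        have h1 := congrFun huv x
        have h2 := congrFun huv x'
        simp only [Function.comp_apply] at h1 h2
        rw [← hx, ← hx', h1, h2, hxx']
    | refl => rfl
    | symm _ _ _ ih => exact ih.symm
    | trans _ _ _ _ _ ih1 ih2 => exact ih1.trans ih2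
  let wbar : Quotient s → Fin l := Quotient.lift u resp
  let w : Fin p → Fin l := fun q => wbar (e.symm q)
  have hwf' : w ∘ f' = u := by
    funext a; simp [w, f', wbar]
  have hwg' : w ∘ g' = v := by
    funext b
    have : w (g' b) = u (f (sec b)) := by simp [w, g', f', wbar]
    have h1 := congrFun huv (sec b)
    simp only [Function.comp_apply] at h1
    rw [Function.comp_apply, this, h1, hsec]
  have hw : Function.Surjective w := by
    intro y; obtain ⟨a, ha⟩ := hu y
    exact ⟨f' a, by rw [← ha, ← hwf']; rfl⟩
  refine ⟨⟨w, hw⟩, ⟨hwf', hwg'⟩, ?_⟩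
  rintro ⟨w', hw'⟩ ⟨h1, h2⟩
  ext q
  obtain ⟨a, ha⟩ := hf' q
  have := congrFun h1 a
  have := congrFun hwf' a
  simp only [Function.comp_apply, ha] at *
  omega
end
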